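/- arXiv:2106.07463 — 2 statements merged into one kernel-verified Lean document; each statement's English description precedes it below -/
import Mathlib

section
/- Under the convexity assumption, for every (t,x) ∈ 𝒯×S the map (γ,P) ∈ ℝ(𝒯̄×S)×ℝ(𝒯) ↦ U[γ,P](t,x) ∈ ℝ is concave. Consequently, the dual criterion D̃(γ,P) = ⟨m₀,U[γ,P](0,·)⟩ − Σ_{t∈𝒯} φ*(t,P(t)) − Σ_{s∈𝒯̄} F*(s,γ(s,·)) is concave in (γ,P). -/
noncomputable section
open Finset Filter Topology Bornology
open scoped Classical Pointwise

/-- Fenchel conjugate of a function on a finite coordinate space. -/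
def conjFn {d : Type*} [Fintype d] (g : (d → ℝ) → EReal) (y : d → ℝ) : EReal :=
  ⨆ x : d → ℝ, (↑(∑ i, x i * y i) : EReal) - g x

/-- Fenchel conjugate, scalar case. -/
def conjR (g : ℝ → EReal) (y : ℝ) : EReal :=
  ⨆ x : ℝ, (↑(x * y) : EReal) - g x

/-- Subdifferential (empty where `g = ⊤`). -/
def subdiffFn {d : Type*} [Fintype d] (g : (d → ℝ) → EReal) (x : d → ℝ) : Set (d → ℝ) :=
  {p | g x ≠ ⊤ ∧ ∀ x', g x + (↑(∑ i, p i * (x' i - x i)) : EReal) ≤ g x'}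

def subdiffR (g : ℝ → EReal) (x : ℝ) : Set ℝ :=
  {p | g x ≠ ⊤ ∧ ∀ x', g x + (↑(p * (x' - x)) : EReal) ≤ g x'}

def EProper {E : Type*} (g : E → EReal) : Prop := (∃ x, g x ≠ ⊤) ∧ ∀ x, g x ≠ ⊥

def EConvexOn {E : Type*} [AddCommMonoid E] [SMul ℝ E] (g : E → EReal) : Prop :=
  ∀ x y : E, ∀ a b : ℝ, 0 ≤ a → 0 ≤ b → a + b = 1 →
    g (a • x + b • y) ≤ (a : EReal) * g x + (b : EReal) * g y

def EStrictConvexOn {E : Type*} [AddCommMonoid E] [SMul ℝ E] (g : E → EReal) : Prop :=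
  ∀ x y : E, x ≠ y → g x ≠ ⊤ → g y ≠ ⊤ → ∀ a b : ℝ, 0 < a → 0 < b → a + b = 1 →
    g (a • x + b • y) < (a : EReal) * g x + (b : EReal) * g y

/-- Perspective function. -/
def persp {d : Type*} [Fintype d] (h : (d → ℝ) → EReal) (θ : ℝ) (x : d → ℝ) : EReal :=
  if 0 < θ then (θ : EReal) * h (θ⁻¹ • x)
  else if θ = 0 ∧ x = 0 then 0 else ⊤

/-- The simplex `Δ(S)`. -/
def simplex (n : ℕ) : Set (Fin n → ℝ) :=
  {ρ | (∀ y, ρ y ∈ Set.Icc (0 : ℝ) 1) ∧ ∑ y, ρ y = 1}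

abbrev Msp (T n : ℕ) := Fin (T + 1) → Fin n → ℝ
abbrev Wsp (T n : ℕ) := Fin T → Fin n → Fin n → ℝ
abbrev Psp (T : ℕ) := Fin T → ℝ
abbrev Csp (T n : ℕ) := Msp T n × Wsp T n × Msp T n × Psp T
abbrev Ksp (T n : ℕ) := Msp T n × Msp T n × Psp T
abbrev LSp (T n : ℕ) := Fin T → Fin n → (Fin n → ℝ) → EReal
abbrev FSp (T n : ℕ) := Fin (T + 1) → (Fin n → ℝ) → EReal
abbrev PhiSp (T : ℕ) := Fin T → ℝ → EReal
abbrev ASp (T n : ℕ) := Fin T → Fin n → Fin n → ℝ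

variable {T n : ℕ}

def opA (α : ASp T n) (w : Wsp T n) (t : Fin T) : ℝ := ∑ x, ∑ y, w t x y * α t x y

def opS (w : Wsp T n) (s : Fin (T + 1)) (x : Fin n) : ℝ :=
  if h : (s : ℕ) = 0 then 0
  else ∑ y, w ⟨(s : ℕ) - 1, by have := s.isLt; omega⟩ y x

def mbar0 (m0 : Fin n → ℝ) (s : Fin (T + 1)) (x : Fin n) : ℝ := if s = 0 then m0 x else 0

def Qcpl (α : ASp T n) (m : Msp T n) (π : Wsp T n) (t : Fin T) : ℝ :=
  ∑ x, ∑ y, m t.castSucc x * π t x y * α t x y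

def IsKol (m0 : Fin n → ℝ) (π : Wsp T n) (m : Msp T n) : Prop :=
  (∀ x, m 0 x = m0 x) ∧
    ∀ (t : Fin T) (x : Fin n), m t.succ x = ∑ y, m t.castSucc y * π t y x

def InDelta (π : Wsp T n) : Prop := ∀ t x, π t x ∈ simplex n

def ConvAssumption (ℓ : LSp T n) (F : FSp T n) (φ : PhiSp T) : Prop :=
  (∀ t x, EProper (ℓ t x) ∧ EConvexOn (ℓ t x) ∧ LowerSemicontinuous (ℓ t x) ∧
    ∀ ρ, ℓ t x ρ ≠ ⊤ → ρ ∈ simplex n) ∧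
  (∀ s, EProper (F s) ∧ EConvexOn (F s) ∧ LowerSemicontinuous (F s)) ∧
  (∀ t, EProper (φ t) ∧ EConvexOn (φ t) ∧ LowerSemicontinuous (φ t))

def Jpot (ℓ : LSp T n) (F : FSp T n) (φ : PhiSp T) (α : ASp T n)
    (m : Msp T n) (π : Wsp T n) : EReal :=
  (∑ t, ∑ x, (↑(m t.castSucc x) : EReal) * ℓ t x (π t x)) +
    (∑ t, φ t (Qcpl α m π t)) + ∑ s, F s (m s)

def Jtil (ℓ : LSp T n) (F : FSp T n) (φ : PhiSp T) (α : ASp T n)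
    (m : Msp T n) (w : Wsp T n) : EReal :=
  (∑ t, ∑ x, persp (ℓ t x) (m t.castSucc x) (w t x)) +
    (∑ t, φ t (opA α w t)) + ∑ s, F s (m s)

def FeasP (m0 : Fin n → ℝ) (p : Msp T n × Wsp T n) : Prop := InDelta p.2 ∧ IsKol m0 p.2 p.1

def FeasPt (m0 : Fin n → ℝ) (p : Msp T n × Wsp T n) : Prop :=
  ∀ s x, opS p.2 s x - p.1 s x + mbar0 m0 s x = 0

def valP (ℓ : LSp T n) (F : FSp T n) (φ : PhiSp T) (α : ASp T n) (m0 : Fin n → ℝ) : EReal :=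
  ⨅ p ∈ {p : Msp T n × Wsp T n | FeasP m0 p}, Jpot ℓ F φ α p.1 p.2

def valPt (ℓ : LSp T n) (F : FSp T n) (φ : PhiSp T) (α : ASp T n) (m0 : Fin n → ℝ) : EReal :=
  ⨅ p ∈ {p : Msp T n × Wsp T n | FeasPt m0 p}, Jtil ℓ F φ α p.1 p.2

def IsSolP (ℓ : LSp T n) (F : FSp T n) (φ : PhiSp T) (α : ASp T n) (m0 : Fin n → ℝ)
    (p : Msp T n × Wsp T n) : Prop :=
  FeasP m0 p ∧ ∀ q, FeasP m0 q → Jpot ℓ F φ α p.1 p.2 ≤ Jpot ℓ F φ α q.1 q.2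

def IsSolPt (ℓ : LSp T n) (F : FSp T n) (φ : PhiSp T) (α : ASp T n) (m0 : Fin n → ℝ)
    (p : Msp T n × Wsp T n) : Prop :=
  FeasPt m0 p ∧ ∀ q, FeasPt m0 q → Jtil ℓ F φ α p.1 p.2 ≤ Jtil ℓ F φ α q.1 q.2

def dpCost (ℓ : LSp T n) (α : ASp T n) (u : Msp T n) (P : Psp T)
    (t : Fin T) (x : Fin n) : EReal :=
  conjFn (ℓ t x) (fun y => -(α t x y * P t + u t.succ y))

def FeasD (ℓ : LSp T n) (α : ASp T n) (k : Ksp T n) : Prop :=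
  (∀ t x, (↑(k.1 t.castSucc x) : EReal) + dpCost ℓ α k.1 k.2.2 t x ≤ ↑(k.2.1 t.castSucc x)) ∧
  ∀ x, k.1 (Fin.last T) x = k.2.1 (Fin.last T) x

def Dobj (F : FSp T n) (φ : PhiSp T) (m0 : Fin n → ℝ) (k : Ksp T n) : EReal :=
  (↑(∑ x, m0 x * k.1 0 x) : EReal) - (∑ t, conjR (φ t) (k.2.2 t)) -
    ∑ s, conjFn (F s) (k.2.1 s)

def valD (ℓ : LSp T n) (F : FSp T n) (φ : PhiSp T) (α : ASp T n) (m0 : Fin n → ℝ) : EReal :=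
  ⨆ k ∈ {k : Ksp T n | FeasD ℓ α k}, Dobj F φ m0 k

def IsSolD (ℓ : LSp T n) (F : FSp T n) (φ : PhiSp T) (α : ASp T n) (m0 : Fin n → ℝ)
    (k : Ksp T n) : Prop :=
  FeasD ℓ α k ∧ ∀ k', FeasD ℓ α k' → Dobj F φ m0 k' ≤ Dobj F φ m0 k

/-- `IsDP ℓ α γ P u` : `u = U[γ,P]`, i.e. `u` solves the dynamic programming equation. -/
def IsDP (ℓ : LSp T n) (α : ASp T n) (γ : Msp T n) (P : Psp T) (u : Msp T n) : Prop :=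
  (∀ (t : Fin T) (x : Fin n),
    (↑(u t.castSucc x) : EReal) + dpCost ℓ α u P t x = ↑(γ t.castSucc x)) ∧
  ∀ x, u (Fin.last T) x = γ (Fin.last T) x

def valDt (ℓ : LSp T n) (F : FSp T n) (φ : PhiSp T) (α : ASp T n) (m0 : Fin n → ℝ) : EReal :=
  ⨆ k ∈ {k : Ksp T n | IsDP ℓ α k.2.1 k.2.2 k.1}, Dobj F φ m0 k

def IsSolDt (ℓ : LSp T n) (F : FSp T n) (φ : PhiSp T) (α : ASp T n) (m0 : Fin n → ℝ)
    (γ : Msp T n) (P : Psp T) (u : Msp T n) : Prop :=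
  IsDP ℓ α γ P u ∧
    ∀ γ' P' u', IsDP ℓ α γ' P' u' → Dobj F φ m0 (u', γ', P') ≤ Dobj F φ m0 (u, γ, P)

def IsKolPert (m0 : Fin n → ℝ) (ε1 : Msp T n) (π : Wsp T n) (m1 : Msp T n) : Prop :=
  (∀ x, m1 0 x = mbar0 m0 (0 : Fin (T + 1)) x + ε1 0 x) ∧
  ∀ (t : Fin T) (x : Fin n), m1 t.succ x = (∑ y, m1 t.castSucc y * π t y x) - ε1 t.succ x

def qnorm (ε1 ε2 : Msp T n) (ε3 : Psp T) : ℝ :=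
  Real.sqrt ((∑ s, ∑ x, ε1 s x ^ 2) + (∑ s, ∑ x, ε2 s x ^ 2) + ∑ t, ε3 t ^ 2)

def Qualif (ℓ : LSp T n) (F : FSp T n) (φ : PhiSp T) (α : ASp T n) (m0 : Fin n → ℝ) : Prop :=
  ∃ α0 : ℝ, 0 < α0 ∧ ∀ (ε1 ε2 : Msp T n) (ε3 : Psp T), qnorm ε1 ε2 ε3 ≤ α0 →
    ∃ π : Wsp T n, (∀ t x, ℓ t x (π t x) ≠ ⊤) ∧
      ∃ m1 : Msp T n, IsKolPert m0 ε1 π m1 ∧ (∀ s x, 0 ≤ m1 s x) ∧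
        (∀ s, F s (fun x => m1 s x + ε2 s x) ≠ ⊤) ∧
        ∀ t, φ t (Qcpl α m1 π t + ε3 t) ≠ ⊤

def Fobj (ℓ : LSp T n) (F : FSp T n) (φ : PhiSp T) (c : Csp T n) : EReal :=
  (∑ t, ∑ x, persp (ℓ t x) (c.1 t.castSucc x) (c.2.1 t x)) +
    (∑ t, φ t (c.2.2.2 t)) + ∑ s, F s (c.2.2.1 s)

def Gobj (m0 : Fin n → ℝ) (k : Ksp T n) : EReal :=
  if (∀ s x, k.1 s x = -(mbar0 m0 s x)) ∧ k.2.1 = 0 ∧ k.2.2 = 0 then 0 else ⊤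

def Aop (α : ASp T n) (c : Csp T n) : Ksp T n :=
  (fun s x => opS c.2.1 s x - c.1 s x,
   fun s x => c.1 s x - c.2.2.1 s x,
   fun t => opA α c.2.1 t - c.2.2.2 t)

def AstarOp (α : ASp T n) (k : Ksp T n) : Csp T n :=
  (fun s x => k.2.1 s x - k.1 s x,
   fun t x y => α t x y * k.2.2 t + k.1 t.succ y,
   fun s x => -k.2.1 s x,
   fun t => -k.2.2 t)

def cpair (c c' : Csp T n) : ℝ :=
  (∑ s, ∑ x, c.1 s x * c'.1 s x) + (∑ t, ∑ x, ∑ y, c.2.1 t x y * c'.2.1 t x y) +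
    (∑ s, ∑ x, c.2.2.1 s x * c'.2.2.1 s x) + ∑ t, c.2.2.2 t * c'.2.2.2 t

def kpair (k k' : Ksp T n) : ℝ :=
  (∑ s, ∑ x, k.1 s x * k'.1 s x) + (∑ s, ∑ x, k.2.1 s x * k'.2.1 s x) +
    ∑ t, k.2.2 t * k'.2.2 t

def FobjStar (ℓ : LSp T n) (F : FSp T n) (φ : PhiSp T) (c' : Csp T n) : EReal :=
  ⨆ c : Csp T n, (↑(cpair c c') : EReal) - Fobj ℓ F φ c

def GobjStar (m0 : Fin n → ℝ) (k : Ksp T n) : EReal := ↑(-(∑ x, m0 x * k.1 0 x))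

def PfrakObj (ℓ : LSp T n) (F : FSp T n) (φ : PhiSp T) (α : ASp T n) (m0 : Fin n → ℝ)
    (c : Csp T n) : EReal := Fobj ℓ F φ c + Gobj m0 (Aop α c)

def DfrakObj (ℓ : LSp T n) (F : FSp T n) (φ : PhiSp T) (α : ASp T n) (m0 : Fin n → ℝ)
    (k : Ksp T n) : EReal := FobjStar ℓ F φ (-AstarOp α k) + GobjStar m0 k

def IsSolPfrak (ℓ : LSp T n) (F : FSp T n) (φ : PhiSp T) (α : ASp T n) (m0 : Fin n → ℝ)
    (c : Csp T n) : Prop := ∀ c', PfrakObj ℓ F φ α m0 c ≤ PfrakObj ℓ F φ α m0 c'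

def IsSolDfrak (ℓ : LSp T n) (F : FSp T n) (φ : PhiSp T) (α : ASp T n) (m0 : Fin n → ℝ)
    (k : Ksp T n) : Prop := ∀ k', DfrakObj ℓ F φ α m0 k ≤ DfrakObj ℓ F φ α m0 k'

def MFGi (ℓ : LSp T n) (α : ASp T n) (γ : Msp T n) (P : Psp T) (u : Msp T n) : Prop :=
  (∀ (t : Fin T) (x : Fin n), (↑(u t.castSucc x) : EReal) =
      ⨅ ρ ∈ simplex n,
        ℓ t x ρ + ↑(γ t.castSucc x) + ↑(∑ y, ρ y * (α t x y * P t + u t.succ y))) ∧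
  ∀ x, u (Fin.last T) x = γ (Fin.last T) x

def MFGii (ℓ : LSp T n) (α : ASp T n) (π : Wsp T n) (γ : Msp T n) (P : Psp T)
    (u : Msp T n) : Prop :=
  ∀ (t : Fin T) (x : Fin n),
    ℓ t x (π t x) + ↑(γ t.castSucc x) + ↑(∑ y, π t x y * (α t x y * P t + u t.succ y)) =
      (↑(u t.castSucc x) : EReal)

def IsMFGSol (ℓ : LSp T n) (F : FSp T n) (φ : PhiSp T) (α : ASp T n) (m0 : Fin n → ℝ)
    (m : Msp T n) (π : Wsp T n) (u : Msp T n) (γ : Msp T n) (P : Psp T) : Prop :=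
  InDelta π ∧ MFGi ℓ α γ P u ∧ MFGii ℓ α π γ P u ∧ IsKol m0 π m ∧
    (∀ s, γ s ∈ subdiffFn (F s) (m s)) ∧ ∀ t, P t ∈ subdiffR (φ t) (Qcpl α m π t)


section AuxConcave

lemma ecoe_sum {ι : Type*} (s : Finset ι) (f : ι → ℝ) :
    ((∑ i ∈ s, f i : ℝ) : EReal) = ∑ i ∈ s, (f i : EReal) :=
  map_sum (⟨⟨Real.toEReal, EReal.coe_zero⟩, EReal.coe_add⟩ : ℝ →+ EReal) f s

lemma ereal_eq_real_of_add {a b : ℝ} {c : EReal} (h : (a : EReal) + c = (b : EReal)) :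
    c = ((b - a : ℝ) : EReal) := by
  induction c with
  | bot => rw [EReal.add_bot] at h; exact absurd h.symm (EReal.coe_ne_bot b)
  | coe r =>
    rw [← EReal.coe_add, EReal.coe_eq_coe_iff] at h
    exact congrArg Real.toEReal (by linarith)
  | top =>
    rw [EReal.add_top_of_ne_bot (EReal.coe_ne_bot a)] at h
    exact absurd h.symm (EReal.coe_ne_top b)

lemma conjFn_comb_le {d : Type*} [Fintype d] {g : (d → ℝ) → EReal}
    (hbot : ∀ x, g x ≠ ⊥)
    {y1 y2 yc : d → ℝ} {a b r1 r2 : ℝ} (ha : 0 ≤ a) (hb : 0 ≤ b) (hab : a + b = 1)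
    (hyc : ∀ ρ : d → ℝ, g ρ ≠ ⊤ →
      ∑ i, ρ i * yc i ≤ a * ∑ i, ρ i * y1 i + b * ∑ i, ρ i * y2 i)
    (h1 : conjFn g y1 ≤ (r1 : EReal)) (h2 : conjFn g y2 ≤ (r2 : EReal)) :
    conjFn g yc ≤ ((a * r1 + b * r2 : ℝ) : EReal) := by
  refine iSup_le fun x => ?_
  by_cases hx : g x = ⊤
  · rw [hx, EReal.sub_top]; exact bot_le
  · have hgx : ((g x).toReal : EReal) = g x := EReal.coe_toReal hx (hbot x)
    have e1 : ((∑ i, x i * y1 i : ℝ) : EReal) - g x ≤ (r1 : EReal) :=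
      le_trans (le_iSup (fun z => ((∑ i, z i * y1 i : ℝ) : EReal) - g z) x) h1
    have e2 : ((∑ i, x i * y2 i : ℝ) : EReal) - g x ≤ (r2 : EReal) :=
      le_trans (le_iSup (fun z => ((∑ i, z i * y2 i : ℝ) : EReal) - g z) x) h2
    rw [← hgx, ← EReal.coe_sub, EReal.coe_le_coe_iff] at e1 e2
    have h3 := hyc x hx
    rw [← hgx, ← EReal.coe_sub, EReal.coe_le_coe_iff]
    have hgx' : (a + b) * (g x).toReal = 1 * (g x).toReal := by rw [hab]
    nlinarith [mul_le_mul_of_nonneg_left e1 ha, mul_le_mul_of_nonneg_left e2 hb, hgx']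

lemma conjR_comb_le {g : ℝ → EReal} (hbot : ∀ x, g x ≠ ⊥)
    {y1 y2 : ℝ} {a b r1 r2 : ℝ} (ha : 0 ≤ a) (hb : 0 ≤ b) (hab : a + b = 1)
    (h1 : conjR g y1 ≤ (r1 : EReal)) (h2 : conjR g y2 ≤ (r2 : EReal)) :
    conjR g (a * y1 + b * y2) ≤ ((a * r1 + b * r2 : ℝ) : EReal) := by
  refine iSup_le fun x => ?_
  by_cases hx : g x = ⊤
  · rw [hx, EReal.sub_top]; exact bot_le
  · have hgx : ((g x).toReal : EReal) = g x := EReal.coe_toReal hx (hbot x)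
    have e1 : ((x * y1 : ℝ) : EReal) - g x ≤ (r1 : EReal) :=
      le_trans (le_iSup (fun z => ((z * y1 : ℝ) : EReal) - g z) x) h1
    have e2 : ((x * y2 : ℝ) : EReal) - g x ≤ (r2 : EReal) :=
      le_trans (le_iSup (fun z => ((z * y2 : ℝ) : EReal) - g z) x) h2
    rw [← hgx, ← EReal.coe_sub, EReal.coe_le_coe_iff] at e1 e2
    rw [← hgx, ← EReal.coe_sub, EReal.coe_le_coe_iff]
    have hgx' : (a + b) * (g x).toReal = 1 * (g x).toReal := by rw [hab]
    nlinarith [mul_le_mul_of_nonneg_left e1 ha, mul_le_mul_of_nonneg_left e2 hb, hgx']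

lemma conjFn_ne_bot' {d : Type*} [Fintype d] {g : (d → ℝ) → EReal}
    (hp : EProper g) (y : d → ℝ) : conjFn g y ≠ ⊥ := by
  obtain ⟨x0, hx0⟩ := hp.1
  have h0 : ((∑ i, x0 i * y i : ℝ) : EReal) - g x0 ≤ conjFn g y :=
    le_iSup (fun z => ((∑ i, z i * y i : ℝ) : EReal) - g z) x0
  have hlt : (⊥ : EReal) < ((∑ i, x0 i * y i : ℝ) : EReal) - g x0 := by
    rw [← EReal.coe_toReal hx0 (hp.2 x0), ← EReal.coe_sub]
    exact EReal.bot_lt_coe _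
  exact (hlt.trans_le h0).ne'

lemma conjR_ne_bot' {g : ℝ → EReal} (hp : EProper g) (y : ℝ) : conjR g y ≠ ⊥ := by
  obtain ⟨x0, hx0⟩ := hp.1
  have h0 : ((x0 * y : ℝ) : EReal) - g x0 ≤ conjR g y :=
    le_iSup (fun z => ((z * y : ℝ) : EReal) - g z) x0
  have hlt : (⊥ : EReal) < ((x0 * y : ℝ) : EReal) - g x0 := by
    rw [← EReal.coe_toReal hx0 (hp.2 x0), ← EReal.coe_sub]
    exact EReal.bot_lt_coe _
  exact (hlt.trans_le h0).ne'

lemma esum_ne_bot' {ι : Type*} {s : Finset ι} {f : ι → EReal} (h : ∀ i ∈ s, f i ≠ ⊥) :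
    (∑ i ∈ s, f i) ≠ ⊥ :=
  Finset.sum_induction f (fun x => x ≠ ⊥)
    (fun p q hp hq => by simp [EReal.add_eq_bot_iff, hp, hq]) (by simp) h

lemma esum_eq_top' {ι : Type*} [Fintype ι] {f : ι → EReal} (h : ∀ i, f i ≠ ⊥)
    {i0 : ι} (h0 : f i0 = ⊤) : (∑ i, f i) = ⊤ := by
  rw [← Finset.add_sum_erase Finset.univ f (Finset.mem_univ i0), h0]
  exact EReal.top_add_of_ne_bot (esum_ne_bot' fun i _ => h i)

lemma U_concave_aux {T n : ℕ} {ℓ : LSp T n} {α : ASp T n}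
    (hbot : ∀ t x ρ, ℓ t x ρ ≠ ⊥)
    (hdom : ∀ t x ρ, ℓ t x ρ ≠ ⊤ → ρ ∈ simplex n)
    {γ γ' : Msp T n} {P P' : Psp T} {u u' uc : Msp T n} {a b : ℝ}
    (ha : 0 ≤ a) (hb : 0 ≤ b) (hab : a + b = 1)
    (h1 : IsDP ℓ α γ P u) (h2 : IsDP ℓ α γ' P' u')
    (hc : IsDP ℓ α (fun s x => a * γ s x + b * γ' s x) (fun t => a * P t + b * P' t) uc) :
    ∀ s x, a * u s x + b * u' s x ≤ uc s x := by
  intro s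
  induction s using Fin.reverseInduction with
  | last =>
    intro x
    rw [h1.2 x, h2.2 x, hc.2 x]
  | cast t ih =>
    intro x
    have d1 : dpCost ℓ α u P t x
        = ((γ t.castSucc x - u t.castSucc x : ℝ) : EReal) :=
      ereal_eq_real_of_add (h1.1 t x)
    have d2 : dpCost ℓ α u' P' t x
        = ((γ' t.castSucc x - u' t.castSucc x : ℝ) : EReal) :=
      ereal_eq_real_of_add (h2.1 t x)
    have dc : dpCost ℓ α uc (fun t => a * P t + b * P' t) t x
        = ((a * γ t.castSucc x + b * γ' t.castSucc x - uc t.castSucc x : ℝ) : EReal) :=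
      ereal_eq_real_of_add (hc.1 t x)
    have key : dpCost ℓ α uc (fun t => a * P t + b * P' t) t x ≤
        ((a * (γ t.castSucc x - u t.castSucc x)
          + b * (γ' t.castSucc x - u' t.castSucc x) : ℝ) : EReal) := by
      refine conjFn_comb_le (hbot t x) ha hb hab ?_ d1.le d2.le
      intro ρ hρ
      rw [Finset.mul_sum, Finset.mul_sum, ← Finset.sum_add_distrib]
      refine Finset.sum_le_sum fun y _ => ?_
      have hρy : (0 : ℝ) ≤ ρ y := ((hdom t x ρ hρ).1 y).1
      beta_reduce
      nlinarith [mul_le_mul_of_nonneg_left (ih y) hρy]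
    rw [dc, EReal.coe_le_coe_iff] at key
    linarith

lemma dobj_terms_real {T n : ℕ} {F : FSp T n} {φ : PhiSp T} {m0 : Fin n → ℝ}
    (hφbot : ∀ t y, conjR (φ t) y ≠ ⊥) (hFbot : ∀ s y, conjFn (F s) y ≠ ⊥)
    {u γ : Msp T n} {P : Psp T} (h : Dobj F φ m0 (u, γ, P) ≠ ⊥) :
    (∀ t, conjR (φ t) (P t) ≠ ⊤) ∧ (∀ s, conjFn (F s) (γ s) ≠ ⊤) := by
  constructor
  · intro t ht
    apply h
    simp only [Dobj]
    rw [esum_eq_top' (fun t => hφbot t (P t)) ht, EReal.sub_top, EReal.bot_sub]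
  · intro s hs
    apply h
    simp only [Dobj]
    rw [esum_eq_top' (fun s => hFbot s (γ s)) hs, EReal.sub_top]

end AuxConcave

/-- Lemma 5: the map `(γ,P) ↦ U[γ,P](t,x)` is concave;
consequently, the dual criterion `D̃` is concave in `(γ,P)`. -/
theorem U_concave_and_Dtilde_concave {T n : ℕ} (hT : 1 ≤ T) (hn : 1 ≤ n)
    (ℓ : LSp T n) (F : FSp T n) (φ : PhiSp T) (α : ASp T n)
    (m0 : Fin n → ℝ) (hm0 : m0 ∈ simplex n)
    (hconv : ConvAssumption ℓ F φ) :
    (∀ (γ γ' : Msp T n) (P P' : Psp T) (u u' uc : Msp T n) (a b : ℝ),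
      0 ≤ a → 0 ≤ b → a + b = 1 →
      IsDP ℓ α γ P u → IsDP ℓ α γ' P' u' →
      IsDP ℓ α (fun s x => a * γ s x + b * γ' s x) (fun t => a * P t + b * P' t) uc →
      ∀ (s : Fin (T + 1)) (x : Fin n), a * u s x + b * u' s x ≤ uc s x) ∧
    (∀ (γ γ' : Msp T n) (P P' : Psp T) (u u' uc : Msp T n) (a b : ℝ),
      0 ≤ a → 0 ≤ b → a + b = 1 →
      IsDP ℓ α γ P u → IsDP ℓ α γ' P' u' →
      IsDP ℓ α (fun s x => a * γ s x + b * γ' s x) (fun t => a * P t + b * P' t) uc →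
      (↑a : EReal) * Dobj F φ m0 (u, γ, P) + (↑b : EReal) * Dobj F φ m0 (u', γ', P') ≤
        Dobj F φ m0
          (uc, fun s x => a * γ s x + b * γ' s x, fun t => a * P t + b * P' t)) := by
  obtain ⟨hℓc, hFc, hφc⟩ := hconv
  have hbot : ∀ t x ρ, ℓ t x ρ ≠ ⊥ := fun t x ρ => ((hℓc t x).1).2 ρ
  have hdom : ∀ t x ρ, ℓ t x ρ ≠ ⊤ → ρ ∈ simplex n := fun t x => (hℓc t x).2.2.2
  refine ⟨fun γ γ' P P' u u' uc a b ha hb hab h1 h2 hc =>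
    U_concave_aux hbot hdom ha hb hab h1 h2 hc, ?_⟩
  intro γ γ' P P' u u' uc a b ha hb hab h1 h2 hc
  have hu0 : ∀ x, a * u 0 x + b * u' 0 x ≤ uc 0 x := fun x =>
    U_concave_aux hbot hdom ha hb hab h1 h2 hc 0 x
  have hA : a * (∑ x, m0 x * u 0 x) + b * (∑ x, m0 x * u' 0 x) ≤ ∑ x, m0 x * uc 0 x := by
    rw [Finset.mul_sum, Finset.mul_sum, ← Finset.sum_add_distrib]
    refine Finset.sum_le_sum fun x _ => ?_
    nlinarith [mul_le_mul_of_nonneg_left (hu0 x) ((hm0.1 x).1)]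
  have hφbot : ∀ (t : Fin T) (y : ℝ), conjR (φ t) y ≠ ⊥ :=
    fun t y => conjR_ne_bot' (hφc t).1 y
  have hFbot : ∀ (s : Fin (T + 1)) (y : Fin n → ℝ), conjFn (F s) y ≠ ⊥ :=
    fun s y => conjFn_ne_bot' (hFc s).1 y
  rcases eq_or_lt_of_le ha with ha0 | ha0
  · -- a = 0, b = 1
    have hb1 : b = 1 := by linarith
    subst hb1
    have ha0' : a = 0 := ha0.symm
    subst ha0'
    have hA' : (∑ x, m0 x * u' 0 x) ≤ ∑ x, m0 x * uc 0 x := by linarith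
    simp only [EReal.coe_zero, EReal.coe_one, zero_mul, one_mul, zero_add]
    show Dobj F φ m0 (u', γ', P') ≤ Dobj F φ m0 (uc, γ', P')
    simp only [Dobj]
    exact EReal.sub_le_sub
      (EReal.sub_le_sub (EReal.coe_le_coe_iff.mpr hA') le_rfl) le_rfl
  rcases eq_or_lt_of_le hb with hb0 | hb0
  · -- b = 0, a = 1
    have ha1 : a = 1 := by linarith
    subst ha1
    have hb0' : b = 0 := hb0.symm
    subst hb0'
    have hA' : (∑ x, m0 x * u 0 x) ≤ ∑ x, m0 x * uc 0 x := by linarith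
    simp only [EReal.coe_zero, EReal.coe_one, zero_mul, one_mul, add_zero, mul_zero]
    show Dobj F φ m0 (u, γ, P) ≤ Dobj F φ m0 (uc, γ, P)
    simp only [Dobj]
    exact EReal.sub_le_sub
      (EReal.sub_le_sub (EReal.coe_le_coe_iff.mpr hA') le_rfl) le_rfl
  -- now 0 < a, 0 < b
  by_cases hD1 : Dobj F φ m0 (u, γ, P) = ⊥
  · rw [hD1, EReal.mul_bot_of_pos (EReal.coe_pos.mpr ha0), EReal.bot_add]
    exact bot_le
  by_cases hD2 : Dobj F φ m0 (u', γ', P') = ⊥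
  · rw [hD2, EReal.mul_bot_of_pos (EReal.coe_pos.mpr hb0), EReal.add_bot]
    exact bot_le
  obtain ⟨hφ1, hF1⟩ := dobj_terms_real hφbot hFbot hD1
  obtain ⟨hφ2, hF2⟩ := dobj_terms_real hφbot hFbot hD2
  set cφ1 := fun t => (conjR (φ t) (P t)).toReal with hcφ1def
  set cφ2 := fun t => (conjR (φ t) (P' t)).toReal with hcφ2def
  set cF1 := fun s => (conjFn (F s) (γ s)).toReal with hcF1def
  set cF2 := fun s => (conjFn (F s) (γ' s)).toReal with hcF2def
  have hcφ1 : ∀ t, conjR (φ t) (P t) = ((cφ1 t : ℝ) : EReal) :=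
    fun t => (EReal.coe_toReal (hφ1 t) (hφbot t _)).symm
  have hcφ2 : ∀ t, conjR (φ t) (P' t) = ((cφ2 t : ℝ) : EReal) :=
    fun t => (EReal.coe_toReal (hφ2 t) (hφbot t _)).symm
  have hcF1 : ∀ s, conjFn (F s) (γ s) = ((cF1 s : ℝ) : EReal) :=
    fun s => (EReal.coe_toReal (hF1 s) (hFbot s _)).symm
  have hcF2 : ∀ s, conjFn (F s) (γ' s) = ((cF2 s : ℝ) : EReal) :=
    fun s => (EReal.coe_toReal (hF2 s) (hFbot s _)).symm
  have hBc : ∀ t, conjR (φ t) (a * P t + b * P' t)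
      ≤ ((a * cφ1 t + b * cφ2 t : ℝ) : EReal) :=
    fun t => conjR_comb_le (hφc t).1.2 ha hb hab (hcφ1 t).le (hcφ2 t).le
  have hCc : ∀ s, conjFn (F s) (fun x => a * γ s x + b * γ' s x)
      ≤ ((a * cF1 s + b * cF2 s : ℝ) : EReal) := by
    intro s
    refine conjFn_comb_le (hFc s).1.2 ha hb hab ?_ (hcF1 s).le (hcF2 s).le
    intro ρ _
    rw [Finset.mul_sum, Finset.mul_sum, ← Finset.sum_add_distrib]
    exact Finset.sum_le_sum fun i _ => le_of_eq (by ring)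
  have hD1e : Dobj F φ m0 (u, γ, P)
      = (((∑ x, m0 x * u 0 x) - (∑ t, cφ1 t) - (∑ s, cF1 s) : ℝ) : EReal) := by
    simp only [Dobj]
    rw [show (∑ t, conjR (φ t) (P t)) = ∑ t, ((cφ1 t : ℝ) : EReal) from
        Finset.sum_congr rfl fun t _ => hcφ1 t,
      show (∑ s, conjFn (F s) (γ s)) = ∑ s, ((cF1 s : ℝ) : EReal) from
        Finset.sum_congr rfl fun s _ => hcF1 s,
      ← ecoe_sum, ← ecoe_sum, ← EReal.coe_sub, ← EReal.coe_sub]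
  have hD2e : Dobj F φ m0 (u', γ', P')
      = (((∑ x, m0 x * u' 0 x) - (∑ t, cφ2 t) - (∑ s, cF2 s) : ℝ) : EReal) := by
    simp only [Dobj]
    rw [show (∑ t, conjR (φ t) (P' t)) = ∑ t, ((cφ2 t : ℝ) : EReal) from
        Finset.sum_congr rfl fun t _ => hcφ2 t,
      show (∑ s, conjFn (F s) (γ' s)) = ∑ s, ((cF2 s : ℝ) : EReal) from
        Finset.sum_congr rfl fun s _ => hcF2 s,
      ← ecoe_sum, ← ecoe_sum, ← EReal.coe_sub, ← EReal.coe_sub]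
  rw [hD1e, hD2e, ← EReal.coe_mul, ← EReal.coe_mul, ← EReal.coe_add]
  calc ((a * ((∑ x, m0 x * u 0 x) - (∑ t, cφ1 t) - (∑ s, cF1 s))
          + b * ((∑ x, m0 x * u' 0 x) - (∑ t, cφ2 t) - (∑ s, cF2 s)) : ℝ) : EReal)
      = ((( a * (∑ x, m0 x * u 0 x) + b * (∑ x, m0 x * u' 0 x))
          - (∑ t, (a * cφ1 t + b * cφ2 t)) - (∑ s, (a * cF1 s + b * cF2 s)) : ℝ) : EReal) := by
        rw [EReal.coe_eq_coe_iff, Finset.sum_add_distrib, Finset.sum_add_distrib,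
          ← Finset.mul_sum, ← Finset.mul_sum, ← Finset.mul_sum, ← Finset.mul_sum]
        ring
    _ ≤ Dobj F φ m0
          (uc, fun s x => a * γ s x + b * γ' s x, fun t => a * P t + b * P' t) := by
        simp only [Dobj]
        rw [EReal.coe_sub, EReal.coe_sub, ecoe_sum, ecoe_sum]
        refine EReal.sub_le_sub (EReal.sub_le_sub ?_ ?_) ?_
        · exact EReal.coe_le_coe_iff.mpr hA
        · exact Finset.sum_le_sum fun t _ => hBc t
        · exact Finset.sum_le_sum fun s _ => hCc s

end
end

section
/- Under the convexity and qualification assumptions, assume in addition that F(s,·) and φ(t,·) are differentiable for every s ∈ 𝒯̄ and t ∈ 𝒯. If (m,π,u,γ,P) and (m',π',u',γ',P') are two solutions of the system (MFG), then (u,γ,P) = (u',γ',P'). If moreover ℓ(t,x,·) is strictly convex for every (t,x) ∈ 𝒯×S, then also (m,π) = (m',π'), so (MFG) has a unique solution. -/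
noncomputable section
open Finset Filter Topology Bornology
open scoped Classical Pointwise

variable {T n : ℕ}

/-!
Summing the dynamic programming inequality `(i)` of one solution along the flow `(m', π')` of
the other (summation by parts against the Kolmogorov equation) shows that the cost of
`(m', π')` exceeds the cost of `(m, π)` by a sum of nonnegative gaps: the slack of `(i)` at
`π'`, and the gaps of `F` and `φ` above their affine minorants at `m`, `Q[m,π]` with slopes
`γ`, `P`. By symmetry the two costs agree, so all these gaps vanish; then `γ(s)` is also a
subgradient of `F(s,·)` at `m'(s)`, and a subgradient at a point of differentiability is the
gradient, so `γ = γ'`; likewise `P = P'`, and `u = u'` by backward induction in `(i)`. Under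
strict convexity, two distinct minimisers in `(i)` would have a strictly better midpoint, so
`π = π'`, and then `m = m'` by the Kolmogorov equation.
-/

theorem simplex_eq_stdSimplex (n : ℕ) : simplex n = stdSimplex ℝ (Fin n) := by
  ext ρ
  exact ⟨fun h => ⟨fun y => (h.1 y).1, h.2⟩, fun h => ⟨mem_Icc_of_mem_stdSimplex h, h.2⟩⟩

theorem HasDerivAt.eq_of_forall_add_mul_sub_le {f : ℝ → ℝ} {f' a c : ℝ} (hf : HasDerivAt f f' a)
    (hc : ∀ x, f a + c * (x - a) ≤ f x) : c = f' := by
  have hmin : IsLocalMin (fun x => f x - c * (x - a)) a :=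
    Eventually.of_forall fun x => by linarith [hc x]
  have hderiv : HasDerivAt (fun x => f x - c * (x - a)) (f' - c) a := by
    have hsub := hf.sub (((hasDerivAt_id' a).sub_const a).const_mul c)
    rwa [mul_one] at hsub
  linarith [hmin.hasDerivAt_eq_zero hderiv]

theorem DifferentiableAt.eq_fderiv_single_of_subgradient {ι : Type*} [Fintype ι] [DecidableEq ι]
    {g : (ι → ℝ) → ℝ} {a q : ι → ℝ} (hg : DifferentiableAt ℝ g a)
    (hq : ∀ x, g a + ∑ i, q i * (x i - a i) ≤ g x) (i : ι) :
    q i = fderiv ℝ g a (Pi.single i 1) := by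
  have hline : HasDerivAt (fun t : ℝ => g (a + t • Pi.single i 1))
      (fderiv ℝ g a (Pi.single i 1)) 0 := by
    have hg' : HasFDerivAt g (fderiv ℝ g a) (a + (0 : ℝ) • Pi.single i 1) := by
      simpa using hg.hasFDerivAt
    have hcomp :=
      hg'.comp_hasDerivAt (0 : ℝ) (((hasDerivAt_id (0 : ℝ)).smul_const _).const_add a)
    rwa [one_smul] at hcomp
  refine hline.eq_of_forall_add_mul_sub_le fun t => ?_
  have hqt := hq (a + t • Pi.single i 1)
  simp only [Pi.add_apply, Pi.smul_apply, Pi.single_apply, smul_eq_mul, add_sub_cancel_left,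
    mul_ite, mul_one, mul_zero, Finset.sum_ite_eq', Finset.mem_univ, if_true] at hqt
  simpa using hqt

theorem eq_of_subgradient_of_differentiableAt {ι : Type*} [Fintype ι]
    {g : (ι → ℝ) → ℝ} {a b q q' : ι → ℝ} (hg : DifferentiableAt ℝ g b)
    (hq : ∀ x, g a + ∑ i, q i * (x i - a i) ≤ g x) (hab : g b ≤ g a + ∑ i, q i * (b i - a i))
    (hq' : ∀ x, g b + ∑ i, q' i * (x i - b i) ≤ g x) : q = q' := by
  classical
  have hqb : ∀ x, g b + ∑ i, q i * (x i - b i) ≤ g x := fun x => by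
    have hsplit : ∑ i, q i * (x i - a i) = ∑ i, q i * (b i - a i) + ∑ i, q i * (x i - b i) := by
      rw [← Finset.sum_add_distrib]; exact Finset.sum_congr rfl fun i _ => by ring
    linarith [hq x]
  funext i
  rw [hg.eq_fderiv_single_of_subgradient hqb, hg.eq_fderiv_single_of_subgradient hq']

theorem eq_of_subgradient_of_differentiableAt_real {f : ℝ → ℝ} {a b c c' : ℝ}
    (hf : DifferentiableAt ℝ f b) (hc : ∀ x, f a + c * (x - a) ≤ f x)
    (hab : f b ≤ f a + c * (b - a)) (hc' : ∀ x, f b + c' * (x - b) ≤ f x) : c = c' :=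
  (hf.hasDerivAt.eq_of_forall_add_mul_sub_le fun x => by linear_combination hc x + hab).trans
    (hf.hasDerivAt.eq_of_forall_add_mul_sub_le hc').symm

theorem mem_subdiffFn_coe {ι : Type*} [Fintype ι] {g : (ι → ℝ) → ℝ} {a q : ι → ℝ} :
    q ∈ subdiffFn (fun z => (g z : EReal)) a ↔ ∀ x, g a + ∑ i, q i * (x i - a i) ≤ g x := by
  simp [subdiffFn, ← EReal.coe_add]

theorem mem_subdiffR_coe {f : ℝ → ℝ} {a c : ℝ} :
    c ∈ subdiffR (fun z => (f z : EReal)) a ↔ ∀ x, f a + c * (x - a) ≤ f x := by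
  simp only [subdiffR, Set.mem_ofPred_eq, EReal.coe_ne_top, ne_eq, not_false_eq_true, true_and]
  norm_cast

variable {ℓ : LSp T n} {α : ASp T n} {m0 : Fin n → ℝ} {m m' : Msp T n} {π π' : Wsp T n}
  {u u' γ γ' : Msp T n} {P P' : Psp T}

/-- The lower bound that the dynamic programming equation `(i)` puts on `ℓ t x ρ`. -/
def costBound (α : ASp T n) (u γ : Msp T n) (P : Psp T) (t : Fin T) (x : Fin n)
    (ρ : Fin n → ℝ) : ℝ :=
  u t.castSucc x - γ t.castSucc x - ∑ y, ρ y * (α t x y * P t + u t.succ y)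

theorem costBound_add {a b : ℝ} (hab : a + b = 1) (t : Fin T) (x : Fin n) (ρ ρ' : Fin n → ℝ) :
    costBound α u γ P t x (a • ρ + b • ρ') =
      a * costBound α u γ P t x ρ + b * costBound α u γ P t x ρ' := by
  simp only [costBound, Pi.add_apply, Pi.smul_apply, smul_eq_mul, add_mul, mul_assoc,
    Finset.sum_add_distrib, ← Finset.mul_sum]
  linear_combination (γ t.castSucc x - u t.castSucc x) * hab

theorem MFGi.costBound_le (h : MFGi ℓ α γ P u) {ρ : Fin n → ℝ} (hρ : ρ ∈ simplex n)
    (t : Fin T) (x : Fin n) : (costBound α u γ P t x ρ : EReal) ≤ ℓ t x ρ := by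
  have hle := (h.1 t x).trans_le (iInf₂_le ρ hρ)
  generalize ℓ t x ρ = e at hle ⊢
  induction e using EReal.rec with
  | bot => simp at hle
  | top => exact le_top
  | coe r =>
    norm_cast at hle ⊢
    unfold costBound
    linarith

theorem MFGii.apply_eq_costBound (h : MFGii ℓ α π γ P u) (t : Fin T) (x : Fin n) :
    ℓ t x (π t x) = costBound α u γ P t x (π t x) := by
  have heq := h t x
  generalize ℓ t x (π t x) = e at heq ⊢
  induction e using EReal.rec with
  | bot => simp at heq
  | top => simp at heq
  | coe r =>
    norm_cast at heq ⊢
    unfold costBound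
    linarith

theorem MFGi.unique (h : MFGi ℓ α γ P u) (h' : MFGi ℓ α γ P u') : u = u' := by
  funext s
  induction s using Fin.reverseInduction with
  | last => funext x; rw [h.2, h'.2]
  | cast t ih =>
    funext x
    exact EReal.coe_injective ((h.1 t x).trans (by rw [ih]; exact (h'.1 t x).symm))

theorem MFGii.eq_of_strictConvex {t : Fin T} {x : Fin n} (hℓ : EStrictConvexOn (ℓ t x))
    (hi : MFGi ℓ α γ P u) (hii : MFGii ℓ α π γ P u) (hii' : MFGii ℓ α π' γ P u)
    (hπ : π t x ∈ simplex n) (hπ' : π' t x ∈ simplex n) : π t x = π' t x := by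
  by_contra hne
  have hmid : (1 / 2 : ℝ) • π t x + (1 / 2 : ℝ) • π' t x ∈ simplex n := by
    rw [simplex_eq_stdSimplex] at hπ hπ' ⊢
    exact convex_stdSimplex ℝ _ hπ hπ' (by norm_num) (by norm_num) (by norm_num)
  have hlt := hℓ _ _ hne (by simp [hii.apply_eq_costBound]) (by simp [hii'.apply_eq_costBound])
    (1 / 2) (1 / 2) (by norm_num) (by norm_num) (by norm_num)
  have hle := hi.costBound_le hmid t x
  rw [hii.apply_eq_costBound, hii'.apply_eq_costBound] at hlt
  rw [costBound_add (by norm_num)] at hle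
  norm_cast at hlt
  exact (hle.trans_lt hlt).false

theorem IsKol.nonneg (hm0 : ∀ x, 0 ≤ m0 x) (hπ : InDelta π) (hm : IsKol m0 π m) :
    ∀ s x, 0 ≤ m s x := by
  intro s
  induction s using Fin.induction with
  | zero => intro x; rw [hm.1]; exact hm0 x
  | succ t ih =>
    intro x
    rw [hm.2]
    exact Finset.sum_nonneg fun y _ => mul_nonneg (ih y) ((hπ t y).1 x).1

theorem IsKol.unique (hm : IsKol m0 π m) (hm' : IsKol m0 π m') : m = m' := by
  funext s
  induction s using Fin.induction with
  | zero => funext x; rw [hm.1, hm'.1]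
  | succ t ih => funext x; rw [hm.2, hm'.2, ih]

/-- Summation by parts against the Kolmogorov equation. -/
theorem IsKol.sum_costBound (hm : IsKol m0 π m)
    (hlast : ∀ x, u (Fin.last T) x = γ (Fin.last T) x) :
    ∑ t, ∑ x, m t.castSucc x * costBound α u γ P t x (π t x) + ∑ t, P t * Qcpl α m π t
      + ∑ s, ∑ x, γ s x * m s x = ∑ x, m0 x * u 0 x := by
  set mu : Fin (T + 1) → ℝ := fun s => ∑ x, m s x * u s x
  set mγ : Fin (T + 1) → ℝ := fun s => ∑ x, γ s x * m s x
  have hstep : ∀ t, ∑ x, m t.castSucc x * costBound α u γ P t x (π t x) =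
      mu t.castSucc - mγ t.castSucc - P t * Qcpl α m π t - mu t.succ := by
    intro t
    have hflow : ∑ x, ∑ y, m t.castSucc x * π t x y * u t.succ y = mu t.succ := by
      rw [Finset.sum_comm]
      exact Finset.sum_congr rfl fun y _ => by rw [hm.2, Finset.sum_mul]
    have hQ : P t * Qcpl α m π t = ∑ x, ∑ y, m t.castSucc x * π t x y * α t x y * P t := by
      simp only [Qcpl, Finset.mul_sum]
      exact Finset.sum_congr rfl fun x _ => Finset.sum_congr rfl fun y _ => by ring
    simp only [mu, mγ, costBound, mul_sub, Finset.mul_sum, mul_add, ← mul_assoc,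
      Finset.sum_sub_distrib, Finset.sum_add_distrib, hQ, ← hflow]
    simp only [mul_comm (γ _ _)]
    ring
  have hlast' : mu (Fin.last T) = mγ (Fin.last T) :=
    Finset.sum_congr rfl fun x _ => by rw [hlast, mul_comm]
  have hfirst : mu 0 = ∑ x, m0 x * u 0 x := Finset.sum_congr rfl fun x _ => by rw [hm.1]
  rw [Finset.sum_congr rfl fun t _ => hstep t]
  simp only [Finset.sum_sub_distrib]
  have := Fin.sum_univ_succ mu
  have := Fin.sum_univ_castSucc mu
  have := Fin.sum_univ_castSucc mγ
  linarith

variable {Fr : Fin (T + 1) → (Fin n → ℝ) → ℝ} {fr : Fin T → ℝ → ℝ}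

/-- By `(ii)`, at a solution this is the value `Jpot ℓ F φ α m π` of the potential problem. -/
def mfgCost (Fr : Fin (T + 1) → (Fin n → ℝ) → ℝ) (fr : Fin T → ℝ → ℝ) (α : ASp T n)
    (u γ : Msp T n) (P : Psp T) (m : Msp T n) (π : Wsp T n) : ℝ :=
  ∑ t, ∑ x, m t.castSucc x * costBound α u γ P t x (π t x) + ∑ t, fr t (Qcpl α m π t)
    + ∑ s, Fr s (m s)

theorem mfgCost_sub_mfgCost (hlast : ∀ x, u (Fin.last T) x = γ (Fin.last T) x)
    (hm : IsKol m0 π m) (hm' : IsKol m0 π' m') :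
    mfgCost Fr fr α u' γ' P' m' π' - mfgCost Fr fr α u γ P m π =
      ∑ t, ∑ x, m' t.castSucc x *
          (costBound α u' γ' P' t x (π' t x) - costBound α u γ P t x (π' t x))
        + ∑ t, (fr t (Qcpl α m' π' t) - fr t (Qcpl α m π t)
          - P t * (Qcpl α m' π' t - Qcpl α m π t))
        + ∑ s, (Fr s (m' s) - Fr s (m s) - ∑ x, γ s x * (m' s x - m s x)) := by
  have h := hm.sum_costBound (α := α) (P := P) hlast
  have h' := hm'.sum_costBound (α := α) (P := P) hlast
  simp only [mfgCost, mul_sub, Finset.sum_sub_distrib]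
  linarith

section Solutions

variable (hm0 : ∀ x, 0 ≤ m0 x)
  (h : IsMFGSol ℓ (fun s z => (Fr s z : EReal)) (fun t z => (fr t z : EReal)) α m0 m π u γ P)
  (h' : IsMFGSol ℓ (fun s z => (Fr s z : EReal)) (fun t z => (fr t z : EReal)) α m0 m' π' u' γ' P')
include hm0 h h'

theorem IsMFGSol.gaps_nonneg :
    (∀ t x, 0 ≤ m' t.castSucc x *
        (costBound α u' γ' P' t x (π' t x) - costBound α u γ P t x (π' t x))) ∧
      (∀ t, 0 ≤ fr t (Qcpl α m' π' t) - fr t (Qcpl α m π t)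
        - P t * (Qcpl α m' π' t - Qcpl α m π t)) ∧
      ∀ s, 0 ≤ Fr s (m' s) - Fr s (m s) - ∑ x, γ s x * (m' s x - m s x) := by
  obtain ⟨-, hi, -, -, hγ, hP⟩ := h
  obtain ⟨hπ', -, hii', hm', -, -⟩ := h'
  refine ⟨fun t x => mul_nonneg (hm'.nonneg hm0 hπ' _ x) (sub_nonneg.2 ?_), fun t => ?_,
    fun s => ?_⟩
  · have hle := hi.costBound_le (hπ' t x) t x
    rw [hii'.apply_eq_costBound] at hle
    exact_mod_cast hle
  · linarith [mem_subdiffR_coe.1 (hP t) (Qcpl α m' π' t)]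
  · linarith [mem_subdiffFn_coe.1 (hγ s) (m' s)]

theorem IsMFGSol.mfgCost_le :
    mfgCost Fr fr α u γ P m π ≤ mfgCost Fr fr α u' γ' P' m' π' := by
  obtain ⟨hA, hB, hC⟩ := h.gaps_nonneg hm0 h'
  rw [← sub_nonneg, mfgCost_sub_mfgCost h.2.1.2 h.2.2.2.1 h'.2.2.2.1]
  exact add_nonneg (add_nonneg (Finset.sum_nonneg' fun t => Finset.sum_nonneg' (hA t))
    (Finset.sum_nonneg' hB)) (Finset.sum_nonneg' hC)

theorem IsMFGSol.le_affine_minorant :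
    (∀ s, Fr s (m' s) ≤ Fr s (m s) + ∑ x, γ s x * (m' s x - m s x)) ∧
      ∀ t, fr t (Qcpl α m' π' t) ≤ fr t (Qcpl α m π t) + P t * (Qcpl α m' π' t - Qcpl α m π t) := by
  obtain ⟨hA, hB, hC⟩ := h.gaps_nonneg hm0 h'
  have hgap := mfgCost_sub_mfgCost (Fr := Fr) (fr := fr) (α := α) (P := P) (u' := u')
    (γ' := γ') (P' := P') h.2.1.2 h.2.2.2.1 h'.2.2.2.1
  have hle := h'.mfgCost_le hm0 h
  have hA' := Finset.sum_nonneg' (s := Finset.univ) fun t =>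
    Finset.sum_nonneg' (s := Finset.univ) (hA t)
  have hB' := Finset.sum_nonneg' (s := Finset.univ) hB
  have hC' := Finset.sum_nonneg' (s := Finset.univ) hC
  refine ⟨fun s => ?_, fun t => ?_⟩
  · have := Finset.single_le_sum (fun s _ => hC s) (Finset.mem_univ s)
    linarith
  · have := Finset.single_le_sum (fun t _ => hB t) (Finset.mem_univ t)
    linarith

end Solutions

theorem mfg_uniqueness_general {T n : ℕ}
    (ℓ : LSp T n) (F : FSp T n) (φ : PhiSp T) (α : ASp T n)
    (m0 : Fin n → ℝ) (hm0 : m0 ∈ simplex n)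
    (hFdiff : ∀ s : Fin (T + 1), ∃ Fr : (Fin n → ℝ) → ℝ,
      (∀ z, F s z = (↑(Fr z) : EReal)) ∧ Differentiable ℝ Fr)
    (hφdiff : ∀ t : Fin T, ∃ fr : ℝ → ℝ,
      (∀ z, φ t z = (↑(fr z) : EReal)) ∧ Differentiable ℝ fr)
    (m m' : Msp T n) (π π' : Wsp T n) (u u' γ γ' : Msp T n) (P P' : Psp T)
    (h1 : IsMFGSol ℓ F φ α m0 m π u γ P)
    (h2 : IsMFGSol ℓ F φ α m0 m' π' u' γ' P') :
    (u = u' ∧ γ = γ' ∧ P = P') ∧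
    ((∀ t x, EStrictConvexOn (ℓ t x)) → m = m' ∧ π = π') := by
  choose Fr hF hFd using hFdiff
  choose fr hφ hφd using hφdiff
  obtain rfl : F = fun s z => (Fr s z : EReal) := funext₂ hF
  obtain rfl : φ = fun t z => (fr t z : EReal) := funext₂ hφ
  obtain ⟨hF12, hφ12⟩ := h1.le_affine_minorant (fun x => (hm0.1 x).1) h2
  obtain ⟨hπ₁, hi₁, hii₁, hm₁, hγ₁, hP₁⟩ := h1
  obtain ⟨hπ₂, hi₂, hii₂, hm₂, hγ₂, hP₂⟩ := h2
  obtain rfl : γ = γ' := funext fun s => eq_of_subgradient_of_differentiableAt (hFd s _)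
    (mem_subdiffFn_coe.1 (hγ₁ s)) (hF12 s) (mem_subdiffFn_coe.1 (hγ₂ s))
  obtain rfl : P = P' := funext fun t => eq_of_subgradient_of_differentiableAt_real (hφd t _)
    (mem_subdiffR_coe.1 (hP₁ t)) (hφ12 t) (mem_subdiffR_coe.1 (hP₂ t))
  obtain rfl : u = u' := hi₁.unique hi₂
  refine ⟨⟨rfl, rfl, rfl⟩, fun hℓ => ?_⟩
  obtain rfl : π = π' := funext₂ fun t x =>
    hii₁.eq_of_strictConvex (hℓ t x) hi₁ hii₂ (hπ₁ t x) (hπ₂ t x)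
  exact ⟨hm₁.unique hm₂, rfl⟩

/-- Proposition 3: uniqueness. If `F` and `φ` are differentiable
then the dual components `(u,γ,P)` of any two MFG solutions coincide; if
moreover each `ℓ(t,x,·)` is strictly convex, the MFG solution is unique. -/
theorem mfg_uniqueness {T n : ℕ} (hT : 1 ≤ T) (hn : 1 ≤ n)
    (ℓ : LSp T n) (F : FSp T n) (φ : PhiSp T) (α : ASp T n)
    (m0 : Fin n → ℝ) (hm0 : m0 ∈ simplex n)
    (hconv : ConvAssumption ℓ F φ) (hqual : Qualif ℓ F φ α m0)
    (hFdiff : ∀ s : Fin (T + 1), ∃ Fr : (Fin n → ℝ) → ℝ,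
      (∀ z, F s z = (↑(Fr z) : EReal)) ∧ Differentiable ℝ Fr)
    (hφdiff : ∀ t : Fin T, ∃ fr : ℝ → ℝ,
      (∀ z, φ t z = (↑(fr z) : EReal)) ∧ Differentiable ℝ fr)
    (m m' : Msp T n) (π π' : Wsp T n) (u u' γ γ' : Msp T n) (P P' : Psp T)
    (h1 : IsMFGSol ℓ F φ α m0 m π u γ P)
    (h2 : IsMFGSol ℓ F φ α m0 m' π' u' γ' P') :
    (u = u' ∧ γ = γ' ∧ P = P') ∧
    ((∀ t x, EStrictConvexOn (ℓ t x)) → m = m' ∧ π = π') :=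
  mfg_uniqueness_general ℓ F φ α m0 hm0 hFdiff hφdiff m m' π π' u u' γ γ' P P' h1 h2

end
end
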